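/- Let N ≥ 2, let -1 ≤ τ_1 < τ_2 < … < τ_N = 1 be distinct points, let ω_N > 0, and let M be an invertible N×N real matrix with the Radau costate differentiation property. Then for every real polynomial p of degree at most N−1, M^{-1} ṗ = p − p(1)·1, where ṗ = (ṗ(τ_1),…,ṗ(τ_N)), p = (p(τ_1),…,p(τ_N)), and 1 is the all-ones vector. -/

import Mathlib

open Polynomial Matrix

/-!
Subtracting the constant polynomial `p(1)` from `p` does not change its derivative, while in
the last row of `M` the boundary term `-p(1)/ω_N` is cancelled by the one of the constant. Hence
`M (p - p(1)·𝟙) = ṗ`, and applying `M⁻¹` gives the claim.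
-/

theorem mulVec_eval_sub_eval_one_eq_eval_derivative
    {N : ℕ} {τ : Fin N → ℝ} {ωN : ℝ} {M : Matrix (Fin N) (Fin N) ℝ}
    {last : Fin N} (hlast_val : (last : ℕ) = N - 1) (hlast : τ last = 1)
    (hM : ∀ p : Polynomial ℝ, p.degree ≤ (N - 1 : ℕ) →
      (∀ i : Fin N, (i : ℕ) < N - 1 →
        M.mulVec (fun j => p.eval (τ j)) i = (derivative p).eval (τ i)) ∧
      M.mulVec (fun j => p.eval (τ j)) last =
        (derivative p).eval 1 - p.eval 1 / ωN)
    {p : Polynomial ℝ} (hp : p.degree ≤ (N - 1 : ℕ)) :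
    M.mulVec (fun i => p.eval (τ i) - p.eval 1) = fun i => (derivative p).eval (τ i) := by
  obtain ⟨hp_interior, hp_last⟩ := hM p hp
  obtain ⟨hc_interior, hc_last⟩ :=
    hM (C (p.eval 1)) (degree_C_le.trans (WithBot.coe_le_coe.2 (Nat.zero_le _)))
  have hsplit : (fun i => p.eval (τ i) - p.eval 1) =
      (fun j => p.eval (τ j)) - fun j => (C (p.eval 1)).eval (τ j) := by
    funext j; simp only [Pi.sub_apply, eval_C]
  funext i
  rw [hsplit, mulVec_sub, Pi.sub_apply]
  by_cases hi : (i : ℕ) < N - 1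
  · rw [hp_interior i hi, hc_interior i hi, derivative_C, eval_zero, sub_zero]
  · rw [show i = last from Fin.ext (by omega), hp_last, hc_last, hlast, derivative_C,
      eval_zero, eval_C]
    ring

/-- Let `N ≥ 2`, let `-1 ≤ τ_1 < … < τ_N = 1` be distinct
points, `ω_N > 0`, and let `M` be an invertible `N×N` matrix with the Radau
costate differentiation property: for every polynomial `p` of degree at most
`N-1`, `(Mp)_i = ṗ(τ_i)` for `i < N` and `(Mp)_N = ṗ(1) − p(1)/ω_N`.
Then for every such `p`, `M⁻¹ ṗ = p − p(1)·𝟙`. -/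
theorem radau_costate_inverse_action
    (N : ℕ) (hN : 2 ≤ N) (τ : Fin N → ℝ) (ωN : ℝ)
    (hlast : τ ⟨N - 1, by omega⟩ = 1)
    (M : Matrix (Fin N) (Fin N) ℝ)
    (hMinv : IsUnit M)
    (hM : ∀ p : Polynomial ℝ, p.degree ≤ (N - 1 : ℕ) →
      (∀ i : Fin N, (i : ℕ) < N - 1 →
        M.mulVec (fun j => p.eval (τ j)) i = (derivative p).eval (τ i)) ∧
      M.mulVec (fun j => p.eval (τ j)) ⟨N - 1, by omega⟩ =
        (derivative p).eval 1 - p.eval 1 / ωN) :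
    ∀ p : Polynomial ℝ, p.degree ≤ (N - 1 : ℕ) →
      M⁻¹.mulVec (fun i => (derivative p).eval (τ i)) =
        fun i => p.eval (τ i) - p.eval 1 := by
  intro p hp
  have := hMinv.invertible
  exact inv_mulVec_eq_vec (mulVec_eval_sub_eval_one_eq_eval_derivative rfl hlast hM hp).symm
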